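/- If two random positive integers φ and ψ are drawn independently with P(φ = n) = P(ψ = n) = (1-f) f^{n-1} for 0 < f < 1, then for coprime positive integers p, q, the probability that φ/(φ+ψ) = p/(p+q) equals (1-f)^2 f^{p+q-2} / (1 - f^{p+q}). -/
import Mathlib

open MeasureTheory ProbabilityTheory

/-- If `φ, ψ` are independent random positive integers with
`P(φ = n) = P(ψ = n) = (1-f) f^{n-1}` for `0 < f < 1`, then for coprime
positive integers `p, q` the probability of the event `φ/(φ+ψ) = p/(p+q)`
(equivalently `q·φ = p·ψ`) equals `(1-f)² f^{p+q-2} / (1 - f^{p+q})`. -/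
theorem prob_ratio_eq (f : ℝ) (hf0 : 0 < f) (hf1 : f < 1)
    {Ω : Type*} [MeasurableSpace Ω] (μ : Measure Ω) [IsProbabilityMeasure μ]
    (φ ψ : Ω → ℕ) (hφ : Measurable φ) (hψ : Measurable ψ)
    (hindep : IndepFun φ ψ μ)
    (hφlaw : ∀ n : ℕ, 0 < n → μ {ω | φ ω = n} = ENNReal.ofReal ((1 - f) * f ^ (n - 1)))
    (hψlaw : ∀ n : ℕ, 0 < n → μ {ω | ψ ω = n} = ENNReal.ofReal ((1 - f) * f ^ (n - 1)))
    (p q : ℕ) (hp : 0 < p) (hq : 0 < q) (hpq : Nat.Coprime p q) :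
    μ {ω | q * φ ω = p * ψ ω ∧ 0 < φ ω} =
      ENNReal.ofReal ((1 - f) ^ 2 * f ^ (p + q - 2) / (1 - f ^ (p + q))) := by
  have hset : {ω | q * φ ω = p * ψ ω ∧ 0 < φ ω} =
      ⋃ s : ℕ, (φ ⁻¹' {(s+1)*p} ∩ ψ ⁻¹' {(s+1)*q}) := by
    ext ω
    simp only [Set.mem_setOf_eq, Set.mem_iUnion, Set.mem_inter_iff, Set.mem_preimage,
      Set.mem_singleton_iff]
    constructor
    · rintro ⟨h1, h2⟩
      have hdvd : p ∣ φ ω := by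
        have : p ∣ q * φ ω := ⟨ψ ω, h1⟩
        exact (Nat.Coprime.dvd_of_dvd_mul_left hpq this)
      obtain ⟨k, hk⟩ := hdvd
      have hk0 : 0 < k := by
        rcases Nat.eq_zero_or_pos k with h | h
        · simp [h, hk] at h2
        · exact h
      refine ⟨k - 1, ?_, ?_⟩
      · rw [hk]; have : k - 1 + 1 = k := Nat.succ_pred_eq_of_pos hk0
        rw [this]; ring
      · have : k - 1 + 1 = k := Nat.succ_pred_eq_of_pos hk0
        rw [this]
        have h1' : q * (p * k) = p * ψ ω := by rw [← hk]; exact h1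
        have : p * (k * q) = p * ψ ω := by rw [← h1']; ring
        have := Nat.eq_of_mul_eq_mul_left hp this
        omega
    · rintro ⟨s, h1, h2⟩
      refine ⟨by rw [h1, h2]; ring, by rw [h1]; positivity⟩
  have hd : Pairwise (Function.onFun Disjoint fun s : ℕ => φ ⁻¹' {(s+1)*p} ∩ ψ ⁻¹' {(s+1)*q}) := by
    intro s t hst
    simp only [Function.onFun, Set.disjoint_left]
    rintro ω ⟨h1, _⟩ ⟨h2, _⟩
    simp only [Set.mem_preimage, Set.mem_singleton_iff] at h1 h2
    have : (s+1)*p = (t+1)*p := h1 ▸ h2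
    exact hst (by have := Nat.eq_of_mul_eq_mul_right hp this; omega)
  have hm : ∀ s : ℕ, MeasurableSet (φ ⁻¹' {(s+1)*p} ∩ ψ ⁻¹' {(s+1)*q}) := fun s =>
    (hφ (measurableSet_singleton _)).inter (hψ (measurableSet_singleton _))
  rw [hset, measure_iUnion hd hm]
  have hterm : ∀ s : ℕ, μ (φ ⁻¹' {(s+1)*p} ∩ ψ ⁻¹' {(s+1)*q}) =
        ENNReal.ofReal ((1 - f) ^ 2 * f ^ (p + q - 2) * (f ^ (p + q)) ^ s) := by
      intro s
      rw [hindep.measure_inter_preimage_eq_mul _ _ (measurableSet_singleton _)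
        (measurableSet_singleton _)]
      have h1 : φ ⁻¹' {(s+1)*p} = {ω | φ ω = (s+1)*p} := rfl
      have h2 : ψ ⁻¹' {(s+1)*q} = {ω | ψ ω = (s+1)*q} := rfl
      rw [h1, h2, hφlaw _ (by positivity), hψlaw _ (by positivity),
        ← ENNReal.ofReal_mul (mul_nonneg (by linarith) (pow_nonneg hf0.le _))]
      congr 1
      have hf1' : (1:ℝ) - f ≥ 0 := by linarith
      have he : ((s+1)*p - 1) + ((s+1)*q - 1) = (p + q - 2) + (p+q) * s := by
        have hp1 : 1 ≤ (s+1)*p := Nat.one_le_iff_ne_zero.mpr (by positivity)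
        have hq1 : 1 ≤ (s+1)*q := Nat.one_le_iff_ne_zero.mpr (by positivity)
        have : 2 ≤ p + q := by omega
        cases p with
        | zero => omega
        | succ p' => cases q with
          | zero => omega
          | succ q' => ring_nf; omega
      calc (1 - f) * f ^ ((s+1)*p - 1) * ((1 - f) * f ^ ((s+1)*q - 1))
          = (1 - f)^2 * f ^ (((s+1)*p - 1) + ((s+1)*q - 1)) := by rw [pow_add]; ring
        _ = (1 - f)^2 * (f ^ (p + q - 2) * (f ^ (p+q)) ^ s) := by
            rw [he, pow_add, ← pow_mul]
        _ = (1 - f) ^ 2 * f ^ (p + q - 2) * (f ^ (p + q)) ^ s := by ring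
  simp_rw [hterm]
  rw [← ENNReal.ofReal_tsum_of_nonneg (fun s => by positivity)]
  · congr 1
    rw [tsum_mul_left, tsum_geometric_of_lt_one (by positivity)
      (pow_lt_one₀ hf0.le hf1 (by omega)), div_eq_mul_inv]
  · apply Summable.mul_left
    exact summable_geometric_of_lt_one (by positivity) (pow_lt_one₀ hf0.le hf1 (by omega))
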